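/- Let U ⊆ ℝ² be open, let X : U → ℝ³ be twice continuously differentiable with X(u) ≠ 0 for all u ∈ U, harmonic components ∂₁∂₁X + ∂₂∂₂X = 0, and conformal: ⟨∂ᵢX, ∂ⱼX⟩ = E δᵢⱼ on U with E > 0. Let n : U → ℝ³ be twice continuously differentiable with ‖n‖ ≡ 1 and ⟨n, ∂ⱼX⟩ ≡ 0 for j = 1, 2, and let K : U → ℝ be a function such that Δnᵏ = 2 K E nᵏ on U for k = 1, 2, 3 (i.e. each component of n lies in the kernel of the Jacobi operator L_g = Δ_g − 2K_g). Define ν := n − 2⟨X, n⟩ X/‖X‖². Then for each k ∈ {1, 2, 3}: (1/E) Δ(‖X‖² νᵏ) − 2 K ‖X‖² νᵏ = 4 nᵏ on U. -/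

import Mathlib

open scoped RealInnerProductSpace

/-- The partial derivative in the `j`-th coordinate direction of a map defined on `ℝ²`. -/
noncomputable def pd {F : Type*} [NormedAddCommGroup F] [NormedSpace ℝ F]
    (j : Fin 2) (X : EuclideanSpace ℝ (Fin 2) → F) (u : EuclideanSpace ℝ (Fin 2)) : F :=
  fderiv ℝ X u (EuclideanSpace.single j 1)

/-- The flat Laplacian `Δ = ∂₁∂₁ + ∂₂∂₂` of a real-valued function on `ℝ²`. -/
noncomputable def flatLap (f : EuclideanSpace ℝ (Fin 2) → ℝ)
    (u : EuclideanSpace ℝ (Fin 2)) : ℝ :=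
  pd 0 (pd 0 f) u + pd 1 (pd 1 f) u

/-!
Put `Φ = ‖X‖² ν = ‖X‖² n - 2⟪X, n⟫ X`. The product rule
`Δ (B f g) = B (Δf) g + 2 ∑ⱼ B (∂ⱼf) (∂ⱼg) + B f (Δg)` for bilinear `B`, together with `ΔX = 0`,
`Δ‖X‖² = 4E`, `∂ⱼ⟪X, n⟫ = ⟪X, ∂ⱼn⟫` and `∑ⱼ ⟪∂ⱼX, ∂ⱼn⟫ = -⟪n, ΔX⟫ = 0`, gives
`ΔΦ = 4E n + 2KE Φ + 4 ∑ⱼ (⟪X, ∂ⱼX⟫ ∂ⱼn - ⟪X, ∂ⱼn⟫ ∂ⱼX)`.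
The last sum vanishes because the shape operator is self-adjoint: each `∂ⱼn` is tangent, so
`E ∂ⱼn = ∑ᵢ ⟪∂ᵢX, ∂ⱼn⟫ ∂ᵢX`, and `⟪∂ᵢX, ∂ⱼn⟫ = -⟪n, ∂ᵢ∂ⱼX⟫` is symmetric in `i, j`.
-/

open Filter Topology Module

section Calculus

variable {F G H : Type*} [NormedAddCommGroup F] [NormedSpace ℝ F]
  [NormedAddCommGroup G] [NormedSpace ℝ G] [NormedAddCommGroup H] [NormedSpace ℝ H]
  {f g : EuclideanSpace ℝ (Fin 2) → F} {u : EuclideanSpace ℝ (Fin 2)}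

noncomputable def lap (f : EuclideanSpace ℝ (Fin 2) → F) (u : EuclideanSpace ℝ (Fin 2)) : F :=
  ∑ j, pd j (pd j f) u

theorem lap_eq_pd_add_pd (f : EuclideanSpace ℝ (Fin 2) → F) (u : EuclideanSpace ℝ (Fin 2)) :
    lap f u = pd 0 (pd 0 f) u + pd 1 (pd 1 f) u :=
  Fin.sum_univ_two _

theorem flatLap_eq_lap (f : EuclideanSpace ℝ (Fin 2) → ℝ) (u : EuclideanSpace ℝ (Fin 2)) :
    flatLap f u = lap f u :=
  (lap_eq_pd_add_pd f u).symm

theorem Filter.EventuallyEq.pd_eq (h : f =ᶠ[𝓝 u] g) (j : Fin 2) : pd j f u = pd j g u := by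
  simp only [pd, h.fderiv_eq]

theorem Filter.EventuallyEq.pd (h : f =ᶠ[𝓝 u] g) (j : Fin 2) : pd j f =ᶠ[𝓝 u] pd j g :=
  (h.fderiv (𝕜 := ℝ)).mono fun w hw => by simp only [_root_.pd, hw]

theorem Filter.EventuallyEq.lap_eq (h : f =ᶠ[𝓝 u] g) : lap f u = lap g u := by
  simp only [lap, (h.pd _).pd_eq]

theorem ContDiffAt.differentiableAt_pd (hf : ContDiffAt ℝ 2 f u) (j : Fin 2) :
    DifferentiableAt ℝ (pd j f) u :=
  ((hf.fderiv_right (m := 1) (by norm_num)).differentiableAt one_ne_zero).clm_apply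
    (differentiableAt_const _)

theorem ContDiffAt.eventually_differentiableAt (hf : ContDiffAt ℝ 2 f u) :
    ∀ᶠ w in 𝓝 u, DifferentiableAt ℝ f w :=
  (hf.eventually (by simp)).mono fun _ hw => hw.differentiableAt (by norm_num)

theorem pd_comm (hf : ContDiffAt ℝ 2 f u) (i j : Fin 2) : pd i (pd j f) u = pd j (pd i f) u := by
  have hd := (hf.fderiv_right (m := 1) (by norm_num)).differentiableAt one_ne_zero
  unfold pd
  simp only [fderiv_clm_apply hd (differentiableAt_const _)]
  simpa using hf.isSymmSndFDerivAt (by simp) (EuclideanSpace.single i 1) (EuclideanSpace.single j 1)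

theorem pd_const (c : F) (j : Fin 2) : pd j (fun _ => c) u = 0 := by
  simp [pd]

theorem pd_add (hf : DifferentiableAt ℝ f u) (hg : DifferentiableAt ℝ g u) (j : Fin 2) :
    pd j (fun w => f w + g w) u = pd j f u + pd j g u := by
  simp [pd, fderiv_fun_add hf hg]

theorem pd_sub (hf : DifferentiableAt ℝ f u) (hg : DifferentiableAt ℝ g u) (j : Fin 2) :
    pd j (fun w => f w - g w) u = pd j f u - pd j g u := by
  simp [pd, fderiv_fun_sub hf hg]

theorem pd_clm_comp (L : F →L[ℝ] G) (hf : DifferentiableAt ℝ f u) (j : Fin 2) :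
    pd j (fun w => L (f w)) u = L (pd j f u) := by
  simp [pd, fderiv_fun_comp u L.differentiableAt hf]

theorem pd_bilinear (B : F →L[ℝ] G →L[ℝ] H) {g : EuclideanSpace ℝ (Fin 2) → G}
    (hf : DifferentiableAt ℝ f u) (hg : DifferentiableAt ℝ g u) (j : Fin 2) :
    pd j (fun w => B (f w) (g w)) u = B (pd j f u) (g u) + B (f u) (pd j g u) := by
  simp [pd, B.fderiv_of_bilinear hf hg, add_comm]

theorem lap_sub (hf : ContDiffAt ℝ 2 f u) (hg : ContDiffAt ℝ 2 g u) :
    lap (fun w => f w - g w) u = lap f u - lap g u := by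
  have hpd (j : Fin 2) : pd j (fun w => f w - g w) =ᶠ[𝓝 u] fun w => pd j f w - pd j g w :=
    (hf.eventually_differentiableAt.and hg.eventually_differentiableAt).mono
      fun w hw => pd_sub hw.1 hw.2 j
  simp only [lap, ← Finset.sum_sub_distrib, (hpd _).pd_eq,
    pd_sub (hf.differentiableAt_pd _) (hg.differentiableAt_pd _)]

theorem lap_clm_comp (L : F →L[ℝ] G) (hf : ContDiffAt ℝ 2 f u) :
    lap (fun w => L (f w)) u = L (lap f u) := by
  have hpd (j : Fin 2) : pd j (fun w => L (f w)) =ᶠ[𝓝 u] fun w => L (pd j f w) :=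
    hf.eventually_differentiableAt.mono fun w hw => pd_clm_comp L hw j
  simp only [lap, map_sum, (hpd _).pd_eq, pd_clm_comp L (hf.differentiableAt_pd _)]

theorem lap_const_smul (c : ℝ) (hf : ContDiffAt ℝ 2 f u) :
    lap (fun w => c • f w) u = c • lap f u := by
  simpa using lap_clm_comp (c • ContinuousLinearMap.id ℝ F) hf

theorem lap_bilinear (B : F →L[ℝ] G →L[ℝ] H) {g : EuclideanSpace ℝ (Fin 2) → G}
    (hf : ContDiffAt ℝ 2 f u) (hg : ContDiffAt ℝ 2 g u) :
    lap (fun w => B (f w) (g w)) u =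
      B (lap f u) (g u) + (2 : ℝ) • ∑ j, B (pd j f u) (pd j g u) + B (f u) (lap g u) := by
  have hpd (j : Fin 2) : pd j (fun w => B (f w) (g w)) =ᶠ[𝓝 u]
      fun w => B (pd j f w) (g w) + B (f w) (pd j g w) :=
    (hf.eventually_differentiableAt.and hg.eventually_differentiableAt).mono
      fun w hw => pd_bilinear B hw.1 hw.2 j
  have hf1 := hf.differentiableAt (by norm_num)
  have hg1 := hg.differentiableAt (by norm_num)
  have hpd' (j : Fin 2) : pd j (fun w => B (pd j f w) (g w) + B (f w) (pd j g w)) u =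
      B (pd j (pd j f) u) (g u) + (2 : ℝ) • B (pd j f u) (pd j g u) + B (f u) (pd j (pd j g) u) := by
    have hfj := hf.differentiableAt_pd j
    have hgj := hg.differentiableAt_pd j
    rw [pd_add (B.hasFDerivAt_of_bilinear hfj.hasFDerivAt hg1.hasFDerivAt).differentiableAt
      (B.hasFDerivAt_of_bilinear hf1.hasFDerivAt hgj.hasFDerivAt).differentiableAt,
      pd_bilinear B hfj hg1, pd_bilinear B hf1 hgj]
    module
  simp only [lap, (hpd _).pd_eq, hpd', Finset.sum_add_distrib, map_sum,
    FunLike.coe_sum, Finset.sum_apply, Finset.smul_sum]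

theorem lap_apply {ι : Type*} [Fintype ι] {f : EuclideanSpace ℝ (Fin 2) → EuclideanSpace ℝ ι}
    (hf : ContDiffAt ℝ 2 f u) (k : ι) : lap (fun w => f w k) u = lap f u k :=
  lap_clm_comp (EuclideanSpace.proj k) hf

end Calculus

section InnerCalculus

variable {F : Type*} [NormedAddCommGroup F] [InnerProductSpace ℝ F]
  {f g : EuclideanSpace ℝ (Fin 2) → F} {u : EuclideanSpace ℝ (Fin 2)}

theorem pd_inner (hf : DifferentiableAt ℝ f u) (hg : DifferentiableAt ℝ g u) (j : Fin 2) :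
    pd j (fun w => ⟪f w, g w⟫) u = ⟪pd j f u, g u⟫ + ⟪f u, pd j g u⟫ :=
  pd_bilinear (innerSL ℝ : F →L[ℝ] F →L[ℝ] ℝ) hf hg j

theorem lap_inner (hf : ContDiffAt ℝ 2 f u) (hg : ContDiffAt ℝ 2 g u) :
    lap (fun w => ⟪f w, g w⟫) u =
      ⟪lap f u, g u⟫ + 2 * ∑ j, ⟪pd j f u, pd j g u⟫ + ⟪f u, lap g u⟫ := by
  rw [← smul_eq_mul (2 : ℝ)]
  exact lap_bilinear (innerSL ℝ : F →L[ℝ] F →L[ℝ] ℝ) hf hg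

theorem lap_smul {c : EuclideanSpace ℝ (Fin 2) → ℝ} (hc : ContDiffAt ℝ 2 c u)
    (hf : ContDiffAt ℝ 2 f u) :
    lap (fun w => c w • f w) u =
      lap c u • f u + (2 : ℝ) • ∑ j, pd j c u • pd j f u + c u • lap f u := by
  simpa using lap_bilinear (ContinuousLinearMap.lsmul ℝ ℝ : ℝ →L[ℝ] F →L[ℝ] F) hc hf

theorem inner_pd_eq_neg_of_eventually_inner_eq (hf : DifferentiableAt ℝ f u)
    (hg : DifferentiableAt ℝ g u) {c : ℝ} (h : ∀ᶠ w in 𝓝 u, ⟪f w, g w⟫ = c) (j : Fin 2) :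
    ⟪pd j f u, g u⟫ = -⟪f u, pd j g u⟫ := by
  have h' := (show (fun w => ⟪f w, g w⟫) =ᶠ[𝓝 u] fun _ => c from h).pd_eq j
  rw [pd_inner hf hg, pd_const] at h'
  linarith

theorem inner_pd_self_eq_zero_of_eventually_norm_eq (hf : DifferentiableAt ℝ f u) {c : ℝ}
    (h : ∀ᶠ w in 𝓝 u, ‖f w‖ = c) (j : Fin 2) : ⟪f u, pd j f u⟫ = 0 := by
  have h' := inner_pd_eq_neg_of_eventually_inner_eq hf hf
    (h.mono fun w hw => by rw [real_inner_self_eq_norm_sq, hw]) j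
  rw [real_inner_comm] at h'
  linarith

end InnerCalculus

section Frame

variable {F : Type*} [NormedAddCommGroup F] [InnerProductSpace ℝ F]

theorem eq_zero_of_orthogonal_family_of_card_eq_finrank [FiniteDimensional ℝ F]
    {ι : Type*} [Fintype ι] {v : ι → F} (hv0 : ∀ i, v i ≠ 0)
    (hv : Pairwise fun i j => ⟪v i, v j⟫ = 0) (hcard : Fintype.card ι = finrank ℝ F)
    {w : F} (hw : ∀ i, ⟪v i, w⟫ = 0) : w = 0 := by
  have hli := linearIndependent_of_ne_zero_of_inner_eq_zero hv0 hv
  let b := Basis.mk hli (hli.span_eq_top_of_card_eq_finrank' hcard).ge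
  exact InnerProductSpace.ext_inner_left_basis b fun i => by simp [b, hw]

theorem smul_eq_sum_inner_smul_of_inner_eq_zero (hF : finrank ℝ F = 3) {T : Fin 2 → F}
    {ν : F} {E : ℝ} (hE : E ≠ 0) (hT : ∀ i j, ⟪T i, T j⟫ = if i = j then E else 0)
    (hν : ν ≠ 0) (hνT : ∀ j, ⟪ν, T j⟫ = 0) {v : F} (hv : ⟪ν, v⟫ = 0) :
    E • v = ∑ j, ⟪T j, v⟫ • T j := by
  have : FiniteDimensional ℝ F := Module.finite_of_finrank_eq_succ hF
  have h00 : ‖T 0‖ ^ 2 = E := by simpa using hT 0 0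
  have h11 : ‖T 1‖ ^ 2 = E := by simpa using hT 1 1
  have h01 : ⟪T 0, T 1⟫ = 0 := by simpa using hT 0 1
  have hνT' (j : Fin 2) : ⟪T j, ν⟫ = 0 := by rw [real_inner_comm, hνT]
  rw [← sub_eq_zero]
  refine eq_zero_of_orthogonal_family_of_card_eq_finrank (v := ![ν, T 0, T 1]) ?_ ?_
    (by simp [hF]) ?_
  · intro i h
    fin_cases i
    · exact hν h
    · simp_all
    · simp_all
  · intro i j hij
    fin_cases i <;> fin_cases j <;> simp_all [real_inner_comm (T 0) (T 1)]
  · intro i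
    fin_cases i <;>
      simp [Fin.sum_univ_two, inner_add_right, inner_sub_right, real_inner_smul_right,
        hνT, hv, h00, h11, h01, real_inner_comm (T 0) (T 1)] <;> ring

theorem sum_inner_smul_sub_inner_smul_eq_zero (hF : finrank ℝ F = 3) {T N : Fin 2 → F}
    {ν : F} {E : ℝ} (hE : E ≠ 0) (hT : ∀ i j, ⟪T i, T j⟫ = if i = j then E else 0)
    (hν : ν ≠ 0) (hνT : ∀ j, ⟪ν, T j⟫ = 0) (hνN : ∀ j, ⟪ν, N j⟫ = 0)
    (hsymm : ∀ i j, ⟪T i, N j⟫ = ⟪T j, N i⟫) (x : F) :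
    ∑ j, (⟪x, T j⟫ • N j - ⟪x, N j⟫ • T j) = 0 := by
  have hN (j : Fin 2) : E • N j = ∑ i, ⟪T i, N j⟫ • T i :=
    smul_eq_sum_inner_smul_of_inner_eq_zero hF hE hT hν hνT (hνN j)
  have hxN (j : Fin 2) : E * ⟪x, N j⟫ = ∑ i, ⟪T i, N j⟫ * ⟪x, T i⟫ := by
    rw [← real_inner_smul_right, hN, inner_sum]
    simp only [real_inner_smul_right]
  refine smul_right_injective F hE ?_
  simp only [Fin.sum_univ_two] at hN hxN ⊢
  linear_combination (norm := module) ⟪x, T 0⟫ • hN 0 + ⟪x, T 1⟫ • hN 1 - hxN 0 • T 0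
    - hxN 1 • T 1 + hsymm 0 1 • (⟪x, T 1⟫ • T 0 - ⟪x, T 0⟫ • T 1)

end Frame

section MinimalSurface

variable {F : Type*} [NormedAddCommGroup F] [InnerProductSpace ℝ F]
  {X n : EuclideanSpace ℝ (Fin 2) → F} {u : EuclideanSpace ℝ (Fin 2)} {E : ℝ}

theorem lap_inner_self_of_harmonic_of_conformal (hX : ContDiffAt ℝ 2 X u) (hharm : lap X u = 0)
    (hconf : ∀ i j, ⟪pd i X u, pd j X u⟫ = if i = j then E else 0) :
    lap (fun w => ⟪X w, X w⟫) u = 4 * E := by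
  rw [lap_inner hX hX]
  simp only [Fin.sum_univ_two, hconf, if_pos, hharm, inner_zero_left, inner_zero_right]
  ring

theorem inner_pd_normal_pd_eq_neg (hX : ContDiffAt ℝ 2 X u) (hn : DifferentiableAt ℝ n u)
    (hperp : ∀ᶠ w in 𝓝 u, ∀ j, ⟪n w, pd j X w⟫ = 0) (i j : Fin 2) :
    ⟪pd i n u, pd j X u⟫ = -⟪n u, pd i (pd j X) u⟫ :=
  inner_pd_eq_neg_of_eventually_inner_eq hn (hX.differentiableAt_pd j)
    (hperp.mono fun _ hw => hw j) i

theorem inner_pd_pd_normal_symm (hX : ContDiffAt ℝ 2 X u) (hn : DifferentiableAt ℝ n u)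
    (hperp : ∀ᶠ w in 𝓝 u, ∀ j, ⟪n w, pd j X w⟫ = 0) (i j : Fin 2) :
    ⟪pd i X u, pd j n u⟫ = ⟪pd j X u, pd i n u⟫ := by
  rw [real_inner_comm (pd j n u), real_inner_comm (pd i n u), inner_pd_normal_pd_eq_neg hX hn hperp,
    inner_pd_normal_pd_eq_neg hX hn hperp, pd_comm hX]

theorem sum_inner_pd_pd_normal_eq_zero (hX : ContDiffAt ℝ 2 X u) (hn : DifferentiableAt ℝ n u)
    (hharm : lap X u = 0) (hperp : ∀ᶠ w in 𝓝 u, ∀ j, ⟪n w, pd j X w⟫ = 0) :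
    ∑ j, ⟪pd j X u, pd j n u⟫ = 0 := by
  simp only [real_inner_comm (pd _ n u), inner_pd_normal_pd_eq_neg hX hn hperp, Finset.sum_neg_distrib,
    ← inner_sum]
  rw [← lap, hharm, inner_zero_right, neg_zero]

-- `‖X‖² ν` for `ν = n - 2⟪X, n⟫ X / ‖X‖²`, written without the division.
noncomputable def scaledInvertedNormal (X n : EuclideanSpace ℝ (Fin 2) → F)
    (w : EuclideanSpace ℝ (Fin 2)) : F :=
  ⟪X w, X w⟫ • n w - (2 : ℝ) • (⟪X w, n w⟫ • X w)

theorem ContDiffAt.scaledInvertedNormal (hX : ContDiffAt ℝ 2 X u) (hn : ContDiffAt ℝ 2 n u) :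
    ContDiffAt ℝ 2 (scaledInvertedNormal X n) u :=
  ((hX.inner ℝ hX).fun_smul hn).sub (((hX.inner ℝ hn).fun_smul hX).const_smul 2)

theorem lap_scaledInvertedNormal (hF : finrank ℝ F = 3) (hX : ContDiffAt ℝ 2 X u)
    (hn : ContDiffAt ℝ 2 n u) (hharm : lap X u = 0) (hE : E ≠ 0)
    (hconf : ∀ i j, ⟪pd i X u, pd j X u⟫ = if i = j then E else 0)
    (hunit : ∀ᶠ w in 𝓝 u, ‖n w‖ = 1) (hperp : ∀ᶠ w in 𝓝 u, ∀ j, ⟪n w, pd j X w⟫ = 0) {K : ℝ}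
    (hjac : lap n u = (2 * K * E) • n u) :
    lap (scaledInvertedNormal X n) u = (4 * E) • n u + (2 * K * E) • scaledInvertedNormal X n u := by
  have hX1 := hX.differentiableAt (by norm_num)
  have hn1 := hn.differentiableAt (by norm_num)
  have hperp_u : ∀ j, ⟪n u, pd j X u⟫ = 0 := hperp.self_of_nhds
  have hn0 : n u ≠ 0 := fun h => by simpa [h] using hunit.self_of_nhds
  have hS := sum_inner_smul_sub_inner_smul_eq_zero hF hE hconf hn0 hperp_u
    (inner_pd_self_eq_zero_of_eventually_norm_eq hn1 hunit)
    (inner_pd_pd_normal_symm hX hn1 hperp) (X u)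
  have hdXX (j : Fin 2) : pd j (fun w => ⟪X w, X w⟫) u = 2 * ⟪X u, pd j X u⟫ := by
    rw [pd_inner hX1 hX1, real_inner_comm]
    ring
  have hdXn (j : Fin 2) : pd j (fun w => ⟪X w, n w⟫) u = ⟪X u, pd j n u⟫ := by
    rw [pd_inner hX1 hn1, real_inner_comm, hperp_u, zero_add]
  have hlapXn : lap (fun w => ⟪X w, n w⟫) u = 2 * K * E * ⟪X u, n u⟫ := by
    rw [lap_inner hX hn, hharm, sum_inner_pd_pd_normal_eq_zero hX hn1 hharm hperp, hjac,
      inner_zero_left, real_inner_smul_right]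
    ring
  unfold scaledInvertedNormal
  rw [lap_sub ((hX.inner ℝ hX).fun_smul hn) (((hX.inner ℝ hn).fun_smul hX).const_smul 2),
    lap_smul (hX.inner ℝ hX) hn, lap_const_smul 2 ((hX.inner ℝ hn).fun_smul hX),
    lap_smul (hX.inner ℝ hn) hX, lap_inner_self_of_harmonic_of_conformal hX hharm hconf, hlapXn,
    hjac, hharm]
  simp only [hdXX, hdXn, Fin.sum_univ_two] at hS ⊢
  linear_combination (norm := module) (4 : ℝ) • hS

end MinimalSurface

/-- (Lemma 4.1 of the paper, in coordinates.) For a conformally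
parametrized minimal surface `X` avoiding the origin, with conformal factor `E`,
unit normal `n` whose components are Jacobi fields (`Δnᵏ = 2KEnᵏ`), and with
`ν = n − 2⟨X, n⟩X/‖X‖²` the unit normal of the inverted surface, one has
`L_g(‖X‖² νᵏ) = (1/E)Δ(‖X‖² νᵏ) − 2K‖X‖² νᵏ = 4nᵏ`. -/
theorem jacobi_operator_of_inverted_normal
    {U : Set (EuclideanSpace ℝ (Fin 2))} (hU : IsOpen U)
    (X : EuclideanSpace ℝ (Fin 2) → EuclideanSpace ℝ (Fin 3))
    (hC : ContDiffOn ℝ 2 X U)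
    (hX0 : ∀ u ∈ U, X u ≠ 0)
    (hharm : ∀ u ∈ U, pd 0 (pd 0 X) u + pd 1 (pd 1 X) u = 0)
    (E : EuclideanSpace ℝ (Fin 2) → ℝ) (hE : ∀ u ∈ U, 0 < E u)
    (hconf : ∀ u ∈ U, ∀ i j : Fin 2, ⟪pd i X u, pd j X u⟫ = if i = j then E u else 0)
    (n : EuclideanSpace ℝ (Fin 2) → EuclideanSpace ℝ (Fin 3))
    (hn : ContDiffOn ℝ 2 n U)
    (hn1 : ∀ u ∈ U, ‖n u‖ = 1)
    (hperp : ∀ u ∈ U, ∀ j : Fin 2, ⟪n u, pd j X u⟫ = 0)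
    (K : EuclideanSpace ℝ (Fin 2) → ℝ)
    (hjac : ∀ u ∈ U, ∀ k : Fin 3,
      flatLap (fun w => n w k) u = 2 * K u * E u * n u k) :
    let ν : EuclideanSpace ℝ (Fin 2) → EuclideanSpace ℝ (Fin 3) :=
      fun w => n w - ((2 * ⟪X w, n w⟫) / ‖X w‖ ^ 2) • X w
    ∀ u ∈ U, ∀ k : Fin 3,
      (E u)⁻¹ * flatLap (fun w => ‖X w‖ ^ 2 * ν w k) u
        - 2 * K u * (‖X u‖ ^ 2 * ν u k) = 4 * n u k := by
  intro ν u hu k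
  have hUu : U ∈ 𝓝 u := hU.mem_nhds hu
  have hXu : ContDiffAt ℝ 2 X u := hC.contDiffAt hUu
  have hnu : ContDiffAt ℝ 2 n u := hn.contDiffAt hUu
  have hν : (fun w => ‖X w‖ ^ 2 * ν w k) =ᶠ[𝓝 u] fun w => scaledInvertedNormal X n w k :=
    eventually_of_mem hUu fun w hw => by
      have : ‖X w‖ ≠ 0 := norm_ne_zero_iff.2 (hX0 w hw)
      simp only [ν, scaledInvertedNormal, PiLp.sub_apply, PiLp.smul_apply, smul_eq_mul,
        real_inner_self_eq_norm_sq]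
      field_simp
  have hlap_n : lap n u = (2 * K u * E u) • n u := by
    ext k
    rw [← lap_apply hnu, ← flatLap_eq_lap, hjac u hu k, PiLp.smul_apply, smul_eq_mul]
  have hmain := lap_scaledInvertedNormal (finrank_euclideanSpace_fin) hXu hnu
    ((lap_eq_pd_add_pd X u).trans (hharm u hu)) (hE u hu).ne' (hconf u hu)
    (eventually_of_mem hUu hn1) (eventually_of_mem hUu hperp) hlap_n
  rw [flatLap_eq_lap, hν.lap_eq, hν.eq_of_nhds, lap_apply (hXu.scaledInvertedNormal hnu), hmain]
  simp only [PiLp.add_apply, PiLp.smul_apply, smul_eq_mul]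
  field_simp [(hE u hu).ne']
  ring
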